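/- arXiv:1905.09327 — 2 statements merged into one kernel-verified Lean document; each statement's English description precedes it below -/
import Mathlib

section
/- Let D = {x₀ < x₁ < x₂ < ...} be a strictly increasing unbounded sequence of real numbers and let f : D → ℝ be a function with Ω(f) ≠ ∅. Define the lower convex envelope f̆(x) := sup{h(x) : h ∈ Ω(f)} for x ∈ D. Then for every m ∈ D, m belongs to H̃_f if and only if f̆(m) = f(m). -/
/-- `h` is convex on the set `D ⊆ ℝ`. -/
def IsConvexOnSet (D : Set ℝ) (h : ℝ → ℝ) : Prop :=
  ∀ a ∈ D, ∀ x ∈ D, ∀ b ∈ D, a < x → x < b →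
    h x ≤ ((b - x) * h a + (x - a) * h b) / (b - a)

/-- `Ω(f)`: the convex functions on `D` lying below `f` on `D`. -/
def Omega (D : Set ℝ) (f : ℝ → ℝ) : Set (ℝ → ℝ) :=
  {h | IsConvexOnSet D h ∧ ∀ x ∈ D, h x ≤ f x}

/-- The lower convex envelope `f̆(x) = sup {h(x) | h ∈ Ω(f)}`. -/
noncomputable def envelope (D : Set ℝ) (f : ℝ → ℝ) (x : ℝ) : ℝ :=
  sSup ((fun h : ℝ → ℝ => h x) '' Omega D f)

/-- `H̃_f`: points of `D` at which `f(x) − a·x` attains its minimum on `D` for some `a`. -/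
def Htilde (D : Set ℝ) (f : ℝ → ℝ) : Set ℝ :=
  {m | m ∈ D ∧ ∃ a : ℝ, ∀ x ∈ D, f m - a * m ≤ f x - a * x}

/-!
The envelope `f̆` is itself a convex minorant of `f`, and `m ∈ H̃_f` says exactly that some affine
function lies below `f` on `D` and touches it at `m`. Such an affine function belongs to `Ω(f)`, so
it forces `f̆(m) = f(m)`. Conversely, on a strictly increasing sequence the chord of a convex function
between two consecutive points is a supporting line at both of them; applied to `f̆` at `m` and its
successor, it yields the slope that puts `m` in `H̃_f`.
-/

open Set

lemma isConvexOnSet_affine (D : Set ℝ) (c s : ℝ) : IsConvexOnSet D (fun y => c + s * y) := by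
  intro a _ y _ b _ hay hyb
  rw [le_div_iff₀ (by linarith)]
  linarith

lemma IsConvexOnSet.mul_le {D : Set ℝ} {g : ℝ → ℝ} (hg : IsConvexOnSet D g) {a y b : ℝ}
    (ha : a ∈ D) (hy : y ∈ D) (hb : b ∈ D) (hay : a < y) (hyb : y < b) :
    g y * (b - a) ≤ (b - y) * g a + (y - a) * g b :=
  (le_div_iff₀ (by linarith)).1 (hg a ha y hy b hb hay hyb)

lemma IsConvexOnSet.chord_le_of_adjacent {D : Set ℝ} {g : ℝ → ℝ} (hg : IsConvexOnSet D g)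
    {m n : ℝ} (hm : m ∈ D) (hn : n ∈ D) (hmn : m < n) (hadj : ∀ y ∈ D, y ≤ m ∨ n ≤ y) :
    ∀ y ∈ D, g m + (g n - g m) / (n - m) * (y - m) ≤ g y := by
  have hslope : (g n - g m) / (n - m) * (n - m) = g n - g m := div_mul_cancel₀ _ (by linarith)
  intro y hy
  rcases hadj y hy with hym | hny
  · rcases hym.lt_or_eq with hym | rfl
    · have := hg.mul_le hy hm hn hym hmn
      nlinarith
    · simp
  · rcases hny.lt_or_eq with hny | rfl
    · have := hg.mul_le hm hn hy hmn hny
      nlinarith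
    · linarith

lemma IsConvexOnSet.exists_support_of_strictMono {x : ℕ → ℝ} (hx : StrictMono x) {g : ℝ → ℝ}
    (hg : IsConvexOnSet (range x) g) (k : ℕ) :
    ∃ s, ∀ y ∈ range x, g (x k) + s * (y - x k) ≤ g y := by
  refine ⟨_, hg.chord_le_of_adjacent (mem_range_self k) (mem_range_self (k + 1))
    (hx k.lt_succ_self) ?_⟩
  rintro _ ⟨j, rfl⟩
  rcases le_or_gt j k with hjk | hkj
  · exact Or.inl (hx.monotone hjk)
  · exact Or.inr (hx.monotone hkj)

lemma mem_Htilde_iff {D : Set ℝ} {f : ℝ → ℝ} {m : ℝ} :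
    m ∈ Htilde D f ↔ m ∈ D ∧ ∃ s, ∀ y ∈ D, f m + s * (y - m) ≤ f y := by
  refine and_congr_right fun _ => exists_congr fun s => forall₂_congr fun y _ => ?_
  constructor <;> intro h <;> linarith

section Envelope

variable {D : Set ℝ} {f : ℝ → ℝ}

lemma bddAbove_eval_Omega {p : ℝ} (hp : p ∈ D) :
    BddAbove ((fun h : ℝ → ℝ => h p) '' Omega D f) := by
  refine ⟨f p, ?_⟩
  rintro _ ⟨h, hh, rfl⟩
  exact hh.2 p hp

lemma le_envelope {h : ℝ → ℝ} (hh : h ∈ Omega D f) {p : ℝ} (hp : p ∈ D) :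
    h p ≤ envelope D f p :=
  le_csSup (bddAbove_eval_Omega hp) ⟨h, hh, rfl⟩

lemma envelope_mem_Omega (hΩ : (Omega D f).Nonempty) : envelope D f ∈ Omega D f := by
  constructor
  · intro a ha y hy b hb hay hyb
    refine csSup_le (hΩ.image _) ?_
    rintro _ ⟨h, hh, rfl⟩
    calc h y ≤ ((b - y) * h a + (y - a) * h b) / (b - a) := hh.1 a ha y hy b hb hay hyb
      _ ≤ ((b - y) * envelope D f a + (y - a) * envelope D f b) / (b - a) := by
        have := le_envelope hh ha
        have := le_envelope hh hb
        gcongr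
        linarith
  · intro p hp
    refine csSup_le (hΩ.image _) ?_
    rintro _ ⟨h, hh, rfl⟩
    exact hh.2 p hp

lemma envelope_eq_of_affine_le {m s : ℝ} (hΩ : (Omega D f).Nonempty) (hm : m ∈ D)
    (hs : ∀ y ∈ D, f m + s * (y - m) ≤ f y) : envelope D f m = f m := by
  have haff : (fun y => (f m - s * m) + s * y) ∈ Omega D f :=
    ⟨isConvexOnSet_affine D _ s, fun y hy => by linarith [hs y hy]⟩
  have := le_envelope haff hm
  linarith [(envelope_mem_Omega hΩ).2 m hm]

end Envelope

theorem mem_Htilde_iff_envelope_eq_general (x : ℕ → ℝ) (hx : StrictMono x)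
    (D : Set ℝ) (hD : D = Set.range x) (f : ℝ → ℝ)
    (hΩ : (Omega D f).Nonempty) :
    ∀ m ∈ D, (m ∈ Htilde D f ↔ envelope D f m = f m) := by
  intro m hm
  rw [mem_Htilde_iff]
  refine ⟨fun ⟨_, s, hs⟩ => envelope_eq_of_affine_le hΩ hm hs, fun henv => ⟨hm, ?_⟩⟩
  have henvΩ := envelope_mem_Omega hΩ
  subst hD
  obtain ⟨k, rfl⟩ := hm
  obtain ⟨s, hs⟩ := henvΩ.1.exists_support_of_strictMono hx k
  exact ⟨s, fun y hy => henv ▸ (hs y hy).trans (henvΩ.2 y hy)⟩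

/-- For `D` a strictly increasing unbounded sequence of reals and `f` with `Ω(f) ≠ ∅`,
a point `m ∈ D` lies in `H̃_f` iff the lower convex envelope touches `f` at `m`. -/
theorem mem_Htilde_iff_envelope_eq (x : ℕ → ℝ) (hx : StrictMono x)
    (hunb : Filter.Tendsto x Filter.atTop Filter.atTop)
    (D : Set ℝ) (hD : D = Set.range x) (f : ℝ → ℝ)
    (hΩ : (Omega D f).Nonempty) :
    ∀ m ∈ D, (m ∈ Htilde D f ↔ envelope D f m = f m) :=
  mem_Htilde_iff_envelope_eq_general x hx D hD f hΩ
end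

section
/- Let C denote the set of colossally abundant numbers and let c be a real number. If liminf of T(n) as n → ∞ along n ∈ C is at least c, then liminf_{n→∞} T(n) ≥ c, where the liminf is over all integers n ≥ 2. -/
/-- Sum of the positive divisors of `n`. -/
def sigma1 (n : ℕ) : ℕ := ∑ d ∈ n.divisors, d

/-- `T n = (e^γ · log log n − σ(n)/n) · √(log n)`. -/
noncomputable def T (n : ℕ) : ℝ :=
  (Real.exp Real.eulerMascheroniConstant * Real.log (Real.log n) - (sigma1 n : ℝ) / n) *
    Real.sqrt (Real.log n)

/-- Ramanujan's constant `c₁ = e^γ (2√2 − 4 − γ + log 4π)`. -/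
noncomputable def c₁ : ℝ :=
  Real.exp Real.eulerMascheroniConstant *
    (2 * Real.sqrt 2 - 4 - Real.eulerMascheroniConstant + Real.log (4 * Real.pi))

/-- `n` is colossally abundant: there is `ε > 0` with
`σ(k)/k^(1+ε) ≤ σ(n)/n^(1+ε)` for all positive integers `k`. -/
def IsCA (n : ℕ) : Prop :=
  0 < n ∧ ∃ ε : ℝ, 0 < ε ∧ ∀ k : ℕ, 0 < k →
    (sigma1 k : ℝ) / (k : ℝ) ^ (1 + ε) ≤ (sigma1 n : ℝ) / (n : ℝ) ^ (1 + ε)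

namespace CAProof
open Filter Real

lemma sigma1_eq_sigma (n : ℕ) : sigma1 n = ArithmeticFunction.sigma 1 n :=
  (ArithmeticFunction.sigma_one_apply n).symm

lemma sigma1_one : sigma1 1 = 1 := by simp [sigma1]

lemma sigma1_pos {n : ℕ} (hn : 0 < n) : 0 < sigma1 n := by
  refine Finset.sum_pos (fun d hd => Nat.pos_of_mem_divisors hd) ⟨1, Nat.one_mem_divisors.2 hn.ne'⟩

lemma le_sigma1 {n : ℕ} (hn : 0 < n) : n ≤ sigma1 n :=
  Finset.single_le_sum (f := fun d => d) (fun d _ => Nat.zero_le d) (Nat.mem_divisors_self n hn.ne')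

lemma sigma1_mul {m n : ℕ} (h : m.Coprime n) : sigma1 (m * n) = sigma1 m * sigma1 n := by
  simp only [sigma1_eq_sigma]
  exact ArithmeticFunction.isMultiplicative_sigma.map_mul_of_coprime h

lemma sigma1_le_real {n : ℕ} (hn : 0 < n) : (sigma1 n : ℝ) ≤ n * (1 + Real.log n) := by
  have h1 : sigma1 n = ∑ d ∈ n.divisors, n / d := (Nat.sum_div_divisors n id).symm
  calc (sigma1 n : ℝ) = ∑ d ∈ n.divisors, ((n / d : ℕ) : ℝ) := by rw [← Nat.cast_sum, ← h1]
    _ ≤ ∑ d ∈ n.divisors, (n : ℝ) / d := by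
        refine Finset.sum_le_sum fun d hd => Nat.cast_div_le
    _ ≤ ∑ d ∈ Finset.Icc 1 n, (n : ℝ) / d := by
        refine Finset.sum_le_sum_of_subset_of_nonneg ?_ ?_
        · intro d hd
          rcases Nat.mem_divisors.1 hd with ⟨hdvd, hne⟩
          exact Finset.mem_Icc.2 ⟨Nat.pos_of_mem_divisors hd, Nat.le_of_dvd hn hdvd⟩
        · intro d _ _
          positivity
    _ = n * ∑ d ∈ Finset.Icc 1 n, ((d : ℝ))⁻¹ := by
        rw [Finset.mul_sum]; exact Finset.sum_congr rfl fun d _ => div_eq_mul_inv _ _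
    _ ≤ n * (1 + Real.log n) := by
        refine mul_le_mul_of_nonneg_left ?_ (Nat.cast_nonneg n)
        have := harmonic_le_one_add_log n
        rw [harmonic_eq_sum_Icc] at this
        push_cast at this
        exact this
/-- The function whose maximizers are the colossally abundant numbers. -/
noncomputable def F (ε : ℝ) (k : ℕ) : ℝ := (sigma1 k : ℝ) / (k : ℝ) ^ (1 + ε)

def MaxF (ε : ℝ) (N : ℕ) : Prop := 0 < N ∧ ∀ k : ℕ, 0 < k → F ε k ≤ F ε N

lemma isCA_of_isMax {ε : ℝ} {N : ℕ} (hε : 0 < ε) (h : MaxF ε N) : IsCA N :=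
  ⟨h.1, ε, hε, h.2⟩

lemma F_pos {ε : ℝ} {k : ℕ} (hk : 0 < k) : 0 < F ε k := by
  have h1 : (0:ℝ) < (k:ℝ) := by exact_mod_cast hk
  have h2 : (0:ℝ) < (sigma1 k : ℝ) := by exact_mod_cast sigma1_pos hk
  exact div_pos h2 (Real.rpow_pos_of_pos h1 _)

lemma F_one (ε : ℝ) : F ε 1 = 1 := by
  simp [F, sigma1_one]

lemma F_mul {ε : ℝ} {m n : ℕ} (hm : 0 < m) (hn : 0 < n) (h : m.Coprime n) :
    F ε (m * n) = F ε m * F ε n := by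
  have hm' : (0:ℝ) ≤ (m:ℝ) := Nat.cast_nonneg m
  have hn' : (0:ℝ) ≤ (n:ℝ) := Nat.cast_nonneg n
  rw [F, F, F, sigma1_mul h, Nat.cast_mul, Nat.cast_mul, Real.mul_rpow hm' hn']
  rw [div_mul_div_comm]

lemma F_le_aux {ε : ℝ} {k : ℕ} (hk : 0 < k) :
    F ε k ≤ (1 + Real.log k) * (k : ℝ) ^ (-ε) := by
  have hk' : (0:ℝ) < (k:ℝ) := by exact_mod_cast hk
  have h1 : (k:ℝ) ^ (1 + ε) = k * (k:ℝ) ^ ε := by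
    rw [Real.rpow_add hk', Real.rpow_one]
  have h2 : (k:ℝ) ^ (-ε) = ((k:ℝ) ^ ε)⁻¹ := Real.rpow_neg hk'.le ε
  rw [F, h1, h2]
  rw [div_le_iff₀ (by positivity)]
  calc (sigma1 k : ℝ) ≤ k * (1 + Real.log k) := sigma1_le_real hk
    _ = (1 + Real.log k) * ((k:ℝ)^ε)⁻¹ * (k * (k:ℝ)^ε) := by
        field_simp
  
lemma F_le_sigma_div {ε : ℝ} {k : ℕ} (hε : 0 ≤ ε) (hk : 0 < k) :
    F ε k ≤ (sigma1 k : ℝ) / k := by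
  have hk1 : (1:ℝ) ≤ (k:ℝ) := by exact_mod_cast hk
  have : (k:ℝ) ^ (1:ℝ) ≤ (k:ℝ) ^ (1 + ε) :=
    Real.rpow_le_rpow_of_exponent_le hk1 (by linarith)
  rw [Real.rpow_one] at this
  refine div_le_div_of_nonneg_left ?_ (by exact_mod_cast hk) this
  exact_mod_cast (sigma1_pos hk).le

lemma F_eq_exp {ε : ℝ} {k : ℕ} (hk : 0 < k) :
    F ε k = (sigma1 k : ℝ) * Real.exp (-(Real.log k * (1 + ε))) := by
  have hk' : (0:ℝ) < (k:ℝ) := by exact_mod_cast hk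
  rw [F, Real.rpow_def_of_pos hk', div_eq_mul_inv, ← Real.exp_neg]

lemma F_continuous {k : ℕ} (hk : 0 < k) : Continuous fun ε : ℝ => F ε k := by
  have : (fun ε : ℝ => F ε k) =
      fun ε : ℝ => (sigma1 k : ℝ) * Real.exp (-(Real.log k * (1 + ε))) := by
    funext ε; exact F_eq_exp hk
  rw [this]
  continuity

lemma exists_threshold {ε : ℝ} (hε : 0 < ε) :
    ∃ K : ℕ, 1 ≤ K ∧ ∀ k : ℕ, K < k → ∀ ε' : ℝ, ε ≤ ε' → F ε' k < 1 := by
  have t1 : Tendsto (fun x : ℝ => Real.log x / x ^ ε) atTop (nhds 0) :=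
    (isLittleO_log_rpow_atTop hε).tendsto_div_nhds_zero
  have t2 : Tendsto (fun x : ℝ => x ^ (-ε)) atTop (nhds 0) := tendsto_rpow_neg_atTop hε
  have h0 : Tendsto (fun x : ℝ => (1 + Real.log x) * x ^ (-ε)) atTop (nhds 0) := by
    have := t2.add t1
    rw [add_zero] at this
    refine this.congr' ?_
    filter_upwards [eventually_gt_atTop (0:ℝ)] with x hx
    rw [Real.rpow_neg hx.le]
    field_simp
  have h1 : Tendsto (fun k : ℕ => (1 + Real.log k) * (k:ℝ) ^ (-ε)) atTop (nhds 0) :=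
    h0.comp tendsto_natCast_atTop_atTop
  have h2 : ∀ᶠ k : ℕ in atTop, (1 + Real.log k) * (k:ℝ) ^ (-ε) < 1 :=
    h1.eventually_lt_const one_pos
  obtain ⟨K0, hK0⟩ := eventually_atTop.1 h2
  refine ⟨max K0 1, le_max_right _ _, fun k hk ε' hε' => ?_⟩
  have hk1 : 1 ≤ k := le_trans (le_max_right K0 1) hk.le
  have hk1' : (1:ℝ) ≤ (k:ℝ) := by exact_mod_cast hk1
  have hlog : 0 ≤ Real.log k := Real.log_nonneg hk1'
  calc F ε' k ≤ (1 + Real.log k) * (k:ℝ) ^ (-ε') := F_le_aux hk1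
    _ ≤ (1 + Real.log k) * (k:ℝ) ^ (-ε) := by
        refine mul_le_mul_of_nonneg_left ?_ (by linarith)
        exact Real.rpow_le_rpow_of_exponent_le hk1' (by linarith)
    _ < 1 := hK0 k (le_trans (le_max_left K0 1) hk.le)

lemma isMax_le_threshold {ε ε' : ℝ} {K N : ℕ}
    (hK : ∀ k : ℕ, K < k → ∀ ε'' : ℝ, ε ≤ ε'' → F ε'' k < 1)
    (hε' : ε ≤ ε') (hN : MaxF ε' N) : N ≤ K := by
  by_contra hc
  push_neg at hc
  have h1 := hK N (by omega) ε' hε'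
  have h2 := hN.2 1 one_pos
  rw [F_one] at h2
  linarith

lemma exists_isMax {ε : ℝ} (hε : 0 < ε) : ∃ N, MaxF ε N := by
  obtain ⟨K, hK1, hK⟩ := exists_threshold hε
  obtain ⟨N, hNmem, hNmax⟩ := Finset.exists_max_image (Finset.Icc 1 K) (F ε) ⟨1, Finset.mem_Icc.2 ⟨le_refl 1, hK1⟩⟩
  refine ⟨N, (Finset.mem_Icc.1 hNmem).1, fun k hk => ?_⟩
  rcases le_or_gt k K with h | h
  · exact hNmax k (Finset.mem_Icc.2 ⟨hk, h⟩)
  · have := hK k h ε le_rfl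
    have h1 := hNmax 1 (Finset.mem_Icc.2 ⟨le_refl 1, hK1⟩)
    rw [F_one] at h1
    linarith

lemma exists_large_ratio (B : ℝ) : ∃ k : ℕ, 0 < k ∧ B ≤ (sigma1 k : ℝ) / k := by
  obtain ⟨m, hm⟩ := (tendsto_atTop.1 tendsto_sum_range_one_div_nat_succ_atTop B).exists
  refine ⟨m.factorial, m.factorial_pos, ?_⟩
  have hfac : (0:ℝ) < (m.factorial : ℝ) := by exact_mod_cast m.factorial_pos
  have key : ∑ i ∈ Finset.range m, (1:ℝ) / (i + 1) ≤ (sigma1 m.factorial : ℝ) / m.factorial := by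
    have hsub : (Finset.Icc 1 m).image (fun j => m.factorial / j) ⊆ m.factorial.divisors := by
      intro d hd
      obtain ⟨j, hj, rfl⟩ := Finset.mem_image.1 hd
      rcases Finset.mem_Icc.1 hj with ⟨hj1, hj2⟩
      exact Nat.mem_divisors.2 ⟨Nat.div_dvd_of_dvd (Nat.dvd_factorial hj1 hj2), m.factorial_pos.ne'⟩
    have hinj : Set.InjOn (fun j => m.factorial / j) (Finset.Icc 1 m) := by
      intro a ha b hb hab
      have ha' := Finset.mem_Icc.1 ha
      have hb' := Finset.mem_Icc.1 hb
      have hda : a ∣ m.factorial := Nat.dvd_factorial ha'.1 ha'.2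
      have hdb : b ∣ m.factorial := Nat.dvd_factorial hb'.1 hb'.2
      have := congrArg (fun t => m.factorial / t) hab
      simpa [Nat.div_div_self hda m.factorial_pos.ne',
        Nat.div_div_self hdb m.factorial_pos.ne'] using this
    have hnat : ∑ j ∈ Finset.Icc 1 m, m.factorial / j ≤ sigma1 m.factorial := by
      have hinj' : ∀ a ∈ Finset.Icc 1 m, ∀ b ∈ Finset.Icc 1 m,
          m.factorial / a = m.factorial / b → a = b := fun a ha b hb hab => hinj ha hb hab
      calc ∑ j ∈ Finset.Icc 1 m, m.factorial / j
          = ∑ d ∈ (Finset.Icc 1 m).image (fun j => m.factorial / j), d :=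
            (Finset.sum_image (g := fun j => m.factorial / j) (f := fun d => d) hinj').symm
        _ ≤ ∑ d ∈ m.factorial.divisors, d :=
            Finset.sum_le_sum_of_subset_of_nonneg hsub (fun _ _ _ => Nat.zero_le _)
        _ = sigma1 m.factorial := rfl
    have hreal : ∑ j ∈ Finset.Icc 1 m, ((m.factorial / j : ℕ) : ℝ) ≤ (sigma1 m.factorial : ℝ) := by
      exact_mod_cast hnat
    have hcast : ∀ j ∈ Finset.Icc 1 m, ((m.factorial / j : ℕ) : ℝ) = (m.factorial : ℝ) / j := by
      intro j hj
      rcases Finset.mem_Icc.1 hj with ⟨hj1, hj2⟩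
      have : (j:ℝ) ≠ 0 := by positivity
      exact Nat.cast_div (Nat.dvd_factorial hj1 hj2) this
    rw [Finset.sum_congr rfl hcast] at hreal
    rw [le_div_iff₀ hfac]
    calc (∑ i ∈ Finset.range m, (1:ℝ) / (i + 1)) * m.factorial
        = ∑ j ∈ Finset.Icc 1 m, (m.factorial : ℝ) / j := by
          rw [Finset.sum_mul]
          rw [show Finset.Icc 1 m = Finset.map ⟨fun i => i + 1, add_left_injective 1⟩
            (Finset.range m) by
              ext j
              simp only [Finset.mem_Icc, Finset.mem_map, Finset.mem_range,
                Function.Embedding.coeFn_mk]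
              exact ⟨fun h => ⟨j - 1, by omega, by omega⟩, fun ⟨a, ha, he⟩ => by omega⟩]
          rw [Finset.sum_map]
          refine Finset.sum_congr rfl fun i hi => ?_
          simp only [Function.Embedding.coeFn_mk]
          push_cast
          ring
      _ ≤ (sigma1 m.factorial : ℝ) := hreal
  exact le_trans hm key

lemma sigma1_prime_pow_succ {p : ℕ} (hp : p.Prime) (t : ℕ) :
    sigma1 (p ^ (t + 1)) = 1 + p * sigma1 (p ^ t) := by
  rw [sigma1_eq_sigma, sigma1_eq_sigma, ArithmeticFunction.sigma_one_apply_prime_pow hp,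
    ArithmeticFunction.sigma_one_apply_prime_pow hp]
  nth_rewrite 1 [geom_sum_succ]
  ring

lemma sigma1_pp_strictMono {p : ℕ} (hp : p.Prime) : StrictMono (fun t => sigma1 (p ^ t)) := by
  apply strictMono_nat_of_lt_succ
  intro t
  rw [sigma1_prime_pow_succ hp t]
  have h1 : 0 < sigma1 (p ^ t) := sigma1_pos (pow_pos hp.pos t)
  have h2 : 2 ≤ p := hp.two_le
  calc sigma1 (p^t) < 1 + 2 * sigma1 (p^t) := by omega
    _ ≤ 1 + p * sigma1 (p^t) := by
        have := Nat.mul_le_mul_right (sigma1 (p^t)) h2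
        omega

lemma cast_pow_rpow {p : ℕ} (hp : 0 < p) (k : ℕ) (y : ℝ) :
    ((p ^ k : ℕ) : ℝ) ^ y = (p : ℝ) ^ ((k : ℝ) * y) := by
  push_cast
  rw [← Real.rpow_natCast (p : ℝ) k, ← Real.rpow_mul (by positivity)]

lemma F_pow_succ_eq {p : ℕ} (hp : p.Prime) (ε : ℝ) (t : ℕ) :
    F ε (p ^ (t + 1)) =
      F ε (p ^ t) * ((p + 1 / (sigma1 (p ^ t) : ℝ)) / (p : ℝ) ^ ((1 : ℝ) + ε)) := by
  have hσ : (0 : ℝ) < (sigma1 (p ^ t) : ℝ) := by exact_mod_cast sigma1_pos (pow_pos hp.pos t)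
  have hp0 : (0 : ℝ) < (p : ℝ) := by exact_mod_cast hp.pos
  have hr : (0:ℝ) < (p:ℝ) ^ ((t:ℝ) * (1 + ε)) := Real.rpow_pos_of_pos hp0 _
  have hr2 : (0:ℝ) < (p:ℝ) ^ ((1:ℝ) + ε) := Real.rpow_pos_of_pos hp0 _
  rw [F, F, sigma1_prime_pow_succ hp, cast_pow_rpow hp.pos, cast_pow_rpow hp.pos]
  push_cast
  rw [show ((t : ℝ) + 1) * (1 + ε) = (t : ℝ) * (1 + ε) + ((1:ℝ) + ε) by ring,
    Real.rpow_add hp0]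
  field_simp
  ring

lemma F_pow_succ_le_iff {p : ℕ} (hp : p.Prime) {ε : ℝ} {t : ℕ} :
    F ε (p ^ (t + 1)) ≤ F ε (p ^ t) ↔
      (p : ℝ) + 1 / (sigma1 (p ^ t) : ℝ) ≤ (p : ℝ) ^ ((1 : ℝ) + ε) := by
  have hF : 0 < F ε (p ^ t) := F_pos (pow_pos hp.pos t)
  have hp0 : (0 : ℝ) < (p : ℝ) := by exact_mod_cast hp.pos
  have hr2 : (0:ℝ) < (p:ℝ) ^ ((1:ℝ) + ε) := Real.rpow_pos_of_pos hp0 _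
  rw [F_pow_succ_eq hp, mul_le_iff_le_one_right hF, div_le_one hr2]

lemma F_pow_succ_lt_iff {p : ℕ} (hp : p.Prime) {ε : ℝ} {t : ℕ} :
    F ε (p ^ (t + 1)) < F ε (p ^ t) ↔
      (p : ℝ) + 1 / (sigma1 (p ^ t) : ℝ) < (p : ℝ) ^ ((1 : ℝ) + ε) := by
  have hF : 0 < F ε (p ^ t) := F_pos (pow_pos hp.pos t)
  have hp0 : (0 : ℝ) < (p : ℝ) := by exact_mod_cast hp.pos
  have hr2 : (0:ℝ) < (p:ℝ) ^ ((1:ℝ) + ε) := Real.rpow_pos_of_pos hp0 _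
  rw [F_pow_succ_eq hp, mul_lt_iff_lt_one_right hF, div_lt_one hr2]

lemma F_pow_succ_eq_iff {p : ℕ} (hp : p.Prime) {ε : ℝ} {t : ℕ} :
    F ε (p ^ (t + 1)) = F ε (p ^ t) ↔
      (p : ℝ) + 1 / (sigma1 (p ^ t) : ℝ) = (p : ℝ) ^ ((1 : ℝ) + ε) := by
  constructor
  · intro h
    exact le_antisymm ((F_pow_succ_le_iff hp).1 h.le)
      (by by_contra hc; push_neg at hc; exact absurd ((F_pow_succ_lt_iff hp).2 hc) (by rw [h]; exact lt_irrefl _))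
  · intro h
    have hp0 : (0 : ℝ) < (p : ℝ) := by exact_mod_cast hp.pos
    have hr2 : (0:ℝ) < (p:ℝ) ^ ((1:ℝ) + ε) := Real.rpow_pos_of_pos hp0 _
    rw [F_pow_succ_eq hp, h, div_self hr2.ne', mul_one]

lemma maxF_pow_le {ε : ℝ} {A p : ℕ} (hp : p.Prime) (hA : MaxF ε A) (t : ℕ) :
    F ε (p ^ t) ≤ F ε (p ^ (A.factorization p)) := by
  have hA0 : 0 < A := hA.1
  set a := A.factorization p with ha
  set A₀ := A / p ^ a with hA₀
  have hcop : Nat.Coprime p A₀ := Nat.coprime_ordCompl hp hA0.ne'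
  have hA₀pos : 0 < A₀ := Nat.ordCompl_pos p hA0.ne'
  have hsplit : p ^ a * A₀ = A := Nat.ordProj_mul_ordCompl_eq_self A p
  have h1 := hA.2 (p ^ t * A₀) (Nat.mul_pos (pow_pos hp.pos t) hA₀pos)
  rw [← hsplit, F_mul (pow_pos hp.pos t) hA₀pos (hcop.pow_left t),
    F_mul (pow_pos hp.pos a) hA₀pos (hcop.pow_left a)] at h1
  exact le_of_mul_le_mul_right h1 (F_pos hA₀pos)

lemma maxF_exchange_eq {ε : ℝ} {A B p : ℕ} (hp : p.Prime) (hA : MaxF ε A) (hB : MaxF ε B) :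
    F ε (p ^ (A.factorization p)) = F ε (p ^ (B.factorization p)) :=
  le_antisymm (maxF_pow_le hp hB _) (maxF_pow_le hp hA _)

lemma maxF_exchange {ε : ℝ} {A B p : ℕ} (hp : p.Prime) (hA : MaxF ε A) (hB : MaxF ε B) :
    MaxF ε (p ^ (B.factorization p) * (A / p ^ (A.factorization p))) := by
  have hA0 : 0 < A := hA.1
  set a := A.factorization p with ha
  set b := B.factorization p with hb
  set A₀ := A / p ^ a with hA₀
  have hcop : Nat.Coprime p A₀ := Nat.coprime_ordCompl hp hA0.ne'
  have hA₀pos : 0 < A₀ := Nat.ordCompl_pos p hA0.ne'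
  have hsplit : p ^ a * A₀ = A := Nat.ordProj_mul_ordCompl_eq_self A p
  have hval : F ε (p ^ b * A₀) = F ε A := by
    rw [F_mul (pow_pos hp.pos b) hA₀pos (hcop.pow_left b), ← maxF_exchange_eq hp hA hB,
      ← F_mul (pow_pos hp.pos a) hA₀pos (hcop.pow_left a), hsplit]
  exact ⟨Nat.mul_pos (pow_pos hp.pos b) hA₀pos, fun k hk => by rw [hval]; exact hA.2 k hk⟩

lemma factorization_exchange {A p : ℕ} (hp : p.Prime) (hA : 0 < A) (b : ℕ) (q : ℕ) :
    (p ^ b * (A / p ^ (A.factorization p))).factorization q =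
      if q = p then b else A.factorization q := by
  have hA₀pos : 0 < A / p ^ (A.factorization p) := Nat.ordCompl_pos p hA.ne'
  rw [Nat.factorization_mul (pow_ne_zero b hp.pos.ne') hA₀pos.ne',
    hp.factorization_pow, Nat.factorization_ordCompl]
  simp only [Finsupp.add_apply, Finsupp.single_apply, Finsupp.erase_apply]
  by_cases h : q = p
  · subst h; simp
  · simp [h, Ne.symm h]

lemma argmax_consecutive {p : ℕ} (hp : p.Prime) {ε : ℝ} {a b : ℕ} (hab : a + 2 ≤ b)
    (hmax : ∀ t : ℕ, F ε (p ^ t) ≤ F ε (p ^ a)) (heq : F ε (p ^ a) = F ε (p ^ b)) :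
    False := by
  have h1 : F ε (p ^ (a + 1)) ≤ F ε (p ^ a) := hmax _
  have key : ∀ t : ℕ, a < t → F ε (p ^ (t + 1)) < F ε (p ^ t) := by
    intro t ht
    rw [F_pow_succ_lt_iff hp]
    have h2 := (F_pow_succ_le_iff hp).1 h1
    have h3 : (sigma1 (p ^ a) : ℝ) < (sigma1 (p ^ t) : ℝ) := by
      exact_mod_cast sigma1_pp_strictMono hp ht
    have h4 : (0:ℝ) < (sigma1 (p ^ a) : ℝ) := by exact_mod_cast sigma1_pos (pow_pos hp.pos a)
    have h5 : 1 / (sigma1 (p ^ t) : ℝ) < 1 / (sigma1 (p ^ a) : ℝ) :=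
      one_div_lt_one_div_of_lt h4 h3
    linarith
  have hlt : ∀ t : ℕ, a + 2 ≤ t → F ε (p ^ t) < F ε (p ^ (a + 1)) := by
    intro t
    induction t with
    | zero => omega
    | succ t iht =>
      intro ht
      rcases Nat.lt_or_ge t (a + 2) with h | h
      · have : t = a + 1 := by omega
        subst this
        exact key (a + 1) (by omega)
      · exact lt_trans (key t (by omega)) (iht h)
  have := hlt b hab
  have h2 := hmax (a + 1)
  rw [heq] at h2
  exact absurd (lt_of_le_of_lt h2 this) (lt_irrefl _)

lemma eq_of_factorization_eq {A B : ℕ} (hA : 0 < A) (hB : 0 < B)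
    (h : ∀ p, A.factorization p = B.factorization p) : A = B :=
  Nat.eq_iff_prime_padicValNat_eq A B hA.ne' hB.ne' |>.2 (fun p hp => by
    have := h p
    rwa [Nat.factorization_def A hp, Nat.factorization_def B hp] at this)

lemma cross {ε : ℝ} {x : ℕ} :
    ∀ d A B : ℕ,
      ((A.factorization.support ∪ B.factorization.support).filter
        (fun p => A.factorization p ≠ B.factorization p)).card ≤ d →
      MaxF ε A → MaxF ε B → A < x → x ≤ B →
      ∃ K p : ℕ, p.Prime ∧ MaxF ε K ∧ MaxF ε (K * p) ∧ K < x ∧ x ≤ K * p := by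
  intro d
  induction d with
  | zero =>
    intro A B hcard hA hB hAx hxB
    exfalso
    have hD : (A.factorization.support ∪ B.factorization.support).filter
        (fun p => A.factorization p ≠ B.factorization p) = ∅ :=
      Finset.card_eq_zero.1 (Nat.le_zero.1 hcard)
    have : A = B := by
      refine eq_of_factorization_eq hA.1 hB.1 fun p => ?_
      by_contra hc
      have hmem : p ∈ A.factorization.support ∪ B.factorization.support := by
        rcases Nat.eq_zero_or_pos (A.factorization p) with h0 | h0
        · refine Finset.mem_union_right _ ?_
          rw [Finsupp.mem_support_iff]
          omega
        · exact Finset.mem_union_left _ (Finsupp.mem_support_iff.2 (by omega))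
      have : p ∈ (A.factorization.support ∪ B.factorization.support).filter
          (fun p => A.factorization p ≠ B.factorization p) := Finset.mem_filter.2 ⟨hmem, hc⟩
      rw [hD] at this
      exact absurd this (Finset.notMem_empty p)
    omega
  | succ d ih =>
    intro A B hcard hA hB hAx hxB
    set D := (A.factorization.support ∪ B.factorization.support).filter
        (fun p => A.factorization p ≠ B.factorization p) with hDdef
    rcases Finset.eq_empty_or_nonempty D with hD | hD
    · exfalso
      have : A = B := by
        refine eq_of_factorization_eq hA.1 hB.1 fun p => ?_
        by_contra hc
        have hmem : p ∈ A.factorization.support ∪ B.factorization.support := by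
          rcases Nat.eq_zero_or_pos (A.factorization p) with h0 | h0
          · refine Finset.mem_union_right _ ?_
            rw [Finsupp.mem_support_iff]
            omega
          · exact Finset.mem_union_left _ (Finsupp.mem_support_iff.2 (by omega))
        have hmem2 : p ∈ D := Finset.mem_filter.2 ⟨hmem, hc⟩
        rw [hD] at hmem2
        exact absurd hmem2 (Finset.notMem_empty p)
      omega
    obtain ⟨p, hpD⟩ := hD
    have hpD' := Finset.mem_filter.1 hpD
    have hp : p.Prime := by
      rcases Finset.mem_union.1 hpD'.1 with h | h
      · exact Nat.prime_of_mem_primeFactors (by rwa [← Nat.support_factorization])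
      · exact Nat.prime_of_mem_primeFactors (by rwa [← Nat.support_factorization])
    set a := A.factorization p with ha
    set b := B.factorization p with hb
    set A' := p ^ b * (A / p ^ a) with hA'def
    have hA' : MaxF ε A' := maxF_exchange hp hA hB
    have hfact : ∀ q, A'.factorization q = if q = p then b else A.factorization q :=
      factorization_exchange hp hA.1 b
    rcases Nat.lt_or_ge A' x with hcase | hcase
    · -- recurse
      refine ih A' B ?_ hA' hB hcase hxB
      have hsub : ((A'.factorization.support ∪ B.factorization.support).filter
          (fun q => A'.factorization q ≠ B.factorization q)) ⊆ D.erase p := by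
        intro q hq
        rcases Finset.mem_filter.1 hq with ⟨hqmem, hqne⟩
        have hqp : q ≠ p := by
          intro h
          subst h
          rw [hfact q, if_pos rfl] at hqne
          exact hqne rfl
        rw [hfact q, if_neg hqp] at hqne
        refine Finset.mem_erase.2 ⟨hqp, Finset.mem_filter.2 ⟨?_, hqne⟩⟩
        rcases Finset.mem_union.1 hqmem with h | h
        · rw [Finsupp.mem_support_iff, hfact q, if_neg hqp] at h
          exact Finset.mem_union_left _ (Finsupp.mem_support_iff.2 h)
        · exact Finset.mem_union_right _ h
      calc _ ≤ (D.erase p).card := Finset.card_le_card hsub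
        _ = D.card - 1 := Finset.card_erase_of_mem hpD
        _ ≤ d := by omega
    · -- crossing step
      have hApos : 0 < A := hA.1
      have hA₀pos : 0 < A / p ^ a := Nat.ordCompl_pos p hApos.ne'
      have hsplit : p ^ a * (A / p ^ a) = A := Nat.ordProj_mul_ordCompl_eq_self A p
      have hab : a < b := by
        by_contra hc
        push_neg at hc
        have : A' ≤ A := by
          rw [← hsplit, hA'def]
          exact Nat.mul_le_mul_right _ (Nat.pow_le_pow_right hp.pos hc)
        omega
      have hb1 : b = a + 1 := by
        by_contra hc
        have hab2 : a + 2 ≤ b := by omega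
        exact argmax_consecutive hp hab2 (maxF_pow_le hp hA) (maxF_exchange_eq hp hA hB)
      have hApA' : A * p = A' := by
        have h1 : p ^ (a + 1) * (A / p ^ a) = p * (p ^ a * (A / p ^ a)) := by ring
        rw [hA'def, hb1, h1, hsplit, mul_comm]
      refine ⟨A, p, hp, hA, ?_, hAx, ?_⟩
      · rw [hApA']; exact hA'
      · rw [hApA']; exact hcase

lemma sigma_div_le_one_add_log {N : ℕ} (hN : 0 < N) :
    (sigma1 N : ℝ) / N ≤ 1 + Real.log N := by
  have hN' : (0:ℝ) < (N:ℝ) := by exact_mod_cast hN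
  rw [div_le_iff₀ hN']
  calc (sigma1 N : ℝ) ≤ N * (1 + Real.log N) := sigma1_le_real hN
    _ = (1 + Real.log N) * N := by ring

lemma exists_eps_max_ge (x : ℕ) (hx : 2 ≤ x) :
    ∃ ε : ℝ, 0 < ε ∧ ε ≤ 1 ∧ ∃ N, MaxF ε N ∧ x ≤ N := by
  set B : ℝ := 1 + Real.log x with hB
  have hlogx : 0 ≤ Real.log x := Real.log_nonneg (by exact_mod_cast hx.trans' (by norm_num))
  have hB1 : 1 ≤ B := by simp [hB]; linarith
  obtain ⟨k₀, hk₀, hk₀B⟩ := exists_large_ratio (2 * B)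
  have hk₀1 : (1:ℝ) ≤ (k₀:ℝ) := by exact_mod_cast hk₀
  have hlk : 0 ≤ Real.log k₀ := Real.log_nonneg hk₀1
  have hl43 : 0 < Real.log (4/3) := Real.log_pos (by norm_num)
  set ε : ℝ := min 1 (Real.log (4/3) / (Real.log k₀ + 1)) with hεdef
  have hε : 0 < ε := lt_min one_pos (div_pos hl43 (by linarith))
  have hε1 : ε ≤ 1 := min_le_left _ _
  obtain ⟨N, hN⟩ := exists_isMax hε
  refine ⟨ε, hε, hε1, N, hN, ?_⟩
  by_contra hc
  push_neg at hc
  have h1 : F ε N ≤ B := by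
    calc F ε N ≤ (sigma1 N : ℝ) / N := F_le_sigma_div hε.le hN.1
      _ ≤ 1 + Real.log N := sigma_div_le_one_add_log hN.1
      _ ≤ B := by
          rw [hB]
          have : Real.log N ≤ Real.log x :=
            Real.log_le_log (by exact_mod_cast hN.1) (by exact_mod_cast hc.le)
          linarith
  have h2 : B < F ε k₀ := by
    have hexp : (k₀:ℝ) ^ ε < 4/3 := by
      have hk₀' : (0:ℝ) < (k₀:ℝ) := by linarith
      rw [Real.rpow_def_of_pos hk₀']
      have harg : Real.log k₀ * ε < Real.log (4/3) := by
        have h3 : ε ≤ Real.log (4/3) / (Real.log k₀ + 1) := min_le_right _ _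
        have h4 : Real.log k₀ * ε ≤ Real.log k₀ * (Real.log (4/3) / (Real.log k₀ + 1)) :=
          mul_le_mul_of_nonneg_left h3 hlk
        have h5 : Real.log k₀ * (Real.log (4/3) / (Real.log k₀ + 1)) < Real.log (4/3) := by
          rw [mul_div_assoc']
          rw [div_lt_iff₀ (by linarith)]
          nlinarith
        linarith
      calc Real.exp (Real.log k₀ * ε) < Real.exp (Real.log (4/3)) := Real.exp_lt_exp.2 harg
        _ = 4/3 := Real.exp_log (by norm_num)
    have hsplit : F ε k₀ = ((sigma1 k₀ : ℝ) / k₀) * ((k₀:ℝ) ^ ε)⁻¹ := by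
      rw [F]
      have hk₀' : (0:ℝ) < (k₀:ℝ) := by linarith
      rw [Real.rpow_add hk₀', Real.rpow_one]
      field_simp
    have hpow : (0:ℝ) < (k₀:ℝ) ^ ε := Real.rpow_pos_of_pos (by linarith) _
    have hinv : (3:ℝ)/4 < ((k₀:ℝ) ^ ε)⁻¹ := by
      rw [lt_inv_comm₀ (by norm_num) hpow]
      linarith
    rw [hsplit]
    have hσ : (0:ℝ) ≤ (sigma1 k₀ : ℝ) / k₀ := by positivity
    calc B < (2*B) * (3/4) := by linarith
      _ ≤ ((sigma1 k₀:ℝ)/k₀) * (3/4) := by nlinarith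
      _ ≤ ((sigma1 k₀:ℝ)/k₀) * ((k₀:ℝ)^ε)⁻¹ := by nlinarith
  have := hN.2 k₀ hk₀
  linarith

lemma maxF_one_of_one (k : ℕ) (hk : 0 < k) : F 1 k ≤ 1 := by
  have hk1 : (1:ℝ) ≤ (k:ℝ) := by exact_mod_cast hk
  calc F 1 k ≤ (1 + Real.log k) * (k:ℝ) ^ (-(1:ℝ)) := F_le_aux hk
    _ ≤ (k:ℝ) * (k:ℝ) ^ (-(1:ℝ)) := by
        refine mul_le_mul_of_nonneg_right ?_ (Real.rpow_nonneg (by linarith) _)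
        have := Real.log_le_sub_one_of_pos (show (0:ℝ) < k by linarith)
        linarith
    _ = 1 := by
        rw [Real.rpow_neg_one]
        field_simp
    
lemma exists_two_sided (x : ℕ) (hx : 2 ≤ x) :
    ∃ ε : ℝ, 0 < ε ∧ ∃ A B : ℕ, MaxF ε A ∧ MaxF ε B ∧ A < x ∧ x ≤ B := by
  classical
  set E : Set ℝ := {ε : ℝ | 0 < ε ∧ ε ≤ 1 ∧ ∃ N, MaxF ε N ∧ x ≤ N} with hEdef
  obtain ⟨ε₁, hε₁pos, hε₁le, hε₁N⟩ := exists_eps_max_ge x hx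
  have hE_ne : E.Nonempty := ⟨ε₁, hε₁pos, hε₁le, hε₁N⟩
  have hE_bdd : BddAbove E := ⟨1, fun ε hε => hε.2.1⟩
  set ε₀ : ℝ := sSup E with hε₀def
  have hε₀_ge : ε₁ ≤ ε₀ := le_csSup hE_bdd ⟨hε₁pos, hε₁le, hε₁N⟩
  have hε₀_pos : 0 < ε₀ := lt_of_lt_of_le hε₁pos hε₀_ge
  have hε₀_le : ε₀ ≤ 1 := csSup_le hE_ne fun ε hε => hε.2.1
  obtain ⟨K, hK1, hK⟩ := exists_threshold (half_pos hε₀_pos)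
  -- the closed sets
  set I : ℕ → Set ℝ := fun k =>
    Set.Icc (ε₀/2) 1 ∩ ⋂ j ∈ Finset.Icc 1 K, {ε : ℝ | F ε j ≤ F ε k} with hIdef
  have hI_closed : ∀ k, 0 < k → IsClosed (I k) := by
    intro k hk
    refine IsClosed.inter isClosed_Icc ?_
    refine isClosed_biInter fun j hj => ?_
    have hj1 : 0 < j := (Finset.mem_Icc.1 hj).1
    exact isClosed_le (F_continuous hj1) (F_continuous hk)
  have hI_max : ∀ k, 0 < k → ∀ ε ∈ I k, MaxF ε k := by
    intro k hk ε hε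
    obtain ⟨hεIcc, hεint⟩ := hε
    refine ⟨hk, fun m hm => ?_⟩
    rcases le_or_gt m K with h | h
    · have : ε ∈ {ε : ℝ | F ε m ≤ F ε k} := by
        have := Set.mem_iInter₂.1 hεint m (Finset.mem_Icc.2 ⟨hm, h⟩)
        exact this
      exact this
    · have h1 : F ε m < 1 := hK m h ε hεIcc.1
      have h2 : F ε 1 ≤ F ε k := Set.mem_iInter₂.1 hεint 1 (Finset.mem_Icc.2 ⟨le_refl 1, hK1⟩)
      rw [F_one] at h2
      linarith
  have hmax_I : ∀ N ε, MaxF ε N → ε ∈ Set.Icc (ε₀/2) 1 → N ≤ K ∧ ε ∈ I N := by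
    intro N ε hN hεIcc
    have hNK : N ≤ K := by
      by_contra hc
      push_neg at hc
      have h1 := hK N hc ε hεIcc.1
      have h2 := hN.2 1 one_pos
      rw [F_one] at h2
      linarith
    refine ⟨hNK, hεIcc, ?_⟩
    refine Set.mem_iInter₂.2 fun j hj => hN.2 j (Finset.mem_Icc.1 hj).1
  -- B side
  have hB : ∃ B : ℕ, MaxF ε₀ B ∧ x ≤ B := by
    set CB : Set ℝ := ⋃ k ∈ Finset.Icc x K, I k with hCBdef
    have hCB_closed : IsClosed CB :=
      isClosed_biUnion_finset fun k hk => hI_closed k (by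
        have := (Finset.mem_Icc.1 hk).1; omega)
    have hmem : ε₀ ∈ closure CB := by
      rw [Metric.mem_closure_iff]
      intro δ hδ
      set δ' : ℝ := min δ (ε₀/2) with hδ'def
      have hδ' : 0 < δ' := lt_min hδ (half_pos hε₀_pos)
      obtain ⟨ε, hεE, hεgt⟩ := exists_lt_of_lt_csSup hE_ne (by linarith : ε₀ - δ' < ε₀)
      obtain ⟨hεpos, hεle, N, hN, hxN⟩ := hεE
      have hεle₀ : ε ≤ ε₀ := le_csSup hE_bdd ⟨hεpos, hεle, N, hN, hxN⟩
      have hεIcc : ε ∈ Set.Icc (ε₀/2) 1 := by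
        constructor
        · have : δ' ≤ ε₀/2 := min_le_right _ _
          linarith
        · exact hεle
      obtain ⟨hNK, hεI⟩ := hmax_I N ε hN hεIcc
      refine ⟨ε, ?_, ?_⟩
      · exact Set.mem_biUnion (Finset.mem_Icc.2 ⟨hxN, hNK⟩) hεI
      · rw [Real.dist_eq, abs_of_nonneg (by linarith)]
        have : δ' ≤ δ := min_le_left _ _
        linarith
    rw [hCB_closed.closure_eq] at hmem
    rw [hCBdef] at hmem
    obtain ⟨k, hk, hεI⟩ := Set.mem_iUnion₂.1 hmem
    have hk' := Finset.mem_Icc.1 hk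
    exact ⟨k, hI_max k (by omega) ε₀ hεI, hk'.1⟩
  -- A side
  have hA : ∃ A : ℕ, MaxF ε₀ A ∧ A < x := by
    rcases eq_or_lt_of_le hε₀_le with hε₀1 | hε₀1
    · refine ⟨1, ?_, by omega⟩
      rw [hε₀1]
      exact ⟨one_pos, fun k hk => by rw [F_one]; exact maxF_one_of_one k hk⟩
    · set CA : Set ℝ := ⋃ k ∈ Finset.Icc 1 (x-1), I k with hCAdef
      have hCA_closed : IsClosed CA :=
        isClosed_biUnion_finset fun k hk => hI_closed k (by
          have := (Finset.mem_Icc.1 hk).1; omega)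
      have hmem : ε₀ ∈ closure CA := by
        rw [Metric.mem_closure_iff]
        intro δ hδ
        set ε : ℝ := min (ε₀ + δ/2) ((ε₀+1)/2) with hεdef
        have hεgt : ε₀ < ε := lt_min (by linarith) (by linarith)
        have hεle1 : ε ≤ 1 := le_trans (min_le_right _ _) (by linarith)
        have hεpos : 0 < ε := lt_trans hε₀_pos hεgt
        obtain ⟨N, hN⟩ := exists_isMax hεpos
        have hNx : N < x := by
          by_contra hc
          push_neg at hc
          have : ε ∈ E := ⟨hεpos, hεle1, N, hN, hc⟩
          have := le_csSup hE_bdd this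
          linarith
        have hεIcc : ε ∈ Set.Icc (ε₀/2) 1 := ⟨by linarith, hεle1⟩
        obtain ⟨hNK, hεI⟩ := hmax_I N ε hN hεIcc
        refine ⟨ε, ?_, ?_⟩
        · refine Set.mem_biUnion (Finset.mem_Icc.2 ⟨hN.1, by omega⟩) hεI
        · rw [Real.dist_eq, abs_of_nonpos (by linarith)]
          have : ε ≤ ε₀ + δ/2 := min_le_left _ _
          linarith
      rw [hCA_closed.closure_eq] at hmem
      rw [hCAdef] at hmem
      obtain ⟨k, hk, hεI⟩ := Set.mem_iUnion₂.1 hmem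
      have hk' := Finset.mem_Icc.1 hk
      refine ⟨k, hI_max k (by omega) ε₀ hεI, by omega⟩
  obtain ⟨B, hBmax, hxB⟩ := hB
  obtain ⟨A, hAmax, hAx⟩ := hA
  exact ⟨ε₀, hε₀_pos, A, B, hAmax, hBmax, hAx, hxB⟩

lemma exists_CA_crossing (x : ℕ) (hx : 2 ≤ x) :
    ∃ (ε : ℝ) (K p : ℕ), 0 < ε ∧ p.Prime ∧ MaxF ε K ∧ MaxF ε (K * p) ∧ K < x ∧ x ≤ K * p := by
  obtain ⟨ε, hε, A, B, hA, hB, hAx, hxB⟩ := exists_two_sided x hx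
  obtain ⟨K, p, hp, h1, h2, h3, h4⟩ := cross _ A B le_rfl hA hB hAx hxB
  exact ⟨ε, K, p, hε, hp, h1, h2, h3, h4⟩

lemma tie_bound {ε : ℝ} {K p : ℕ} (hp : p.Prime) (hK : MaxF ε K) (hKp : MaxF ε (K * p)) :
    (p : ℝ) ^ ((1 : ℝ) + ε) ≤ (p : ℝ) + 1 := by
  set a := K.factorization p with ha
  have hfp : (K * p).factorization p = a + 1 := by
    rw [Nat.factorization_mul hK.1.ne' hp.pos.ne']
    simp [hp.factorization, ha]
  have heq := maxF_exchange_eq hp hKp hK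
  rw [hfp] at heq
  have h := (F_pow_succ_eq_iff hp).1 heq
  have hσ : (1 : ℝ) ≤ (sigma1 (p ^ a) : ℝ) := by exact_mod_cast sigma1_pos (pow_pos hp.pos a)
  have h1 : 1 / (sigma1 (p ^ a) : ℝ) ≤ 1 := by
    rw [div_le_one (by linarith)]; linarith
  linarith [h.symm.le]

lemma small_prime_dvd {ε : ℝ} {K p q : ℕ} (hε : 0 ≤ ε) (hp : p.Prime) (hq : q.Prime)
    (hqp : q < p) (hK : MaxF ε K) (htie : (p : ℝ) ^ ((1 : ℝ) + ε) ≤ (p : ℝ) + 1) :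
    q ∣ K := by
  by_contra hc
  have ha : K.factorization q = 0 := by
    have := (Nat.Prime.dvd_iff_one_le_factorization hq hK.1.ne').not.1 hc
    omega
  have h1 : F ε (q ^ (0 + 1)) ≤ F ε (q ^ 0) := by
    have := maxF_pow_le hq hK 1
    rw [ha] at this
    simpa using this
  have h2 := (F_pow_succ_le_iff hq).1 h1
  rw [pow_zero, sigma1_one] at h2
  -- h2 : q + 1/1 ≤ q^(1+ε)
  have hq2 : (2 : ℝ) ≤ (q : ℝ) := by exact_mod_cast hq.two_le
  have hp2 : (2 : ℝ) ≤ (p : ℝ) := by exact_mod_cast hp.two_le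
  have hqp' : (q : ℝ) < (p : ℝ) := by exact_mod_cast hqp
  have hq0 : (0 : ℝ) < (q : ℝ) := by linarith
  have hp0 : (0 : ℝ) < (p : ℝ) := by linarith
  have hlq : 0 < Real.log q := Real.log_pos (by linarith)
  have hlp : 0 < Real.log p := Real.log_pos (by linarith)
  -- logs
  have e1 : Real.log ((q : ℝ) + 1) ≤ (1 + ε) * Real.log q := by
    have h2' : ((q:ℝ) + 1) ≤ (q:ℝ) ^ ((1:ℝ) + ε) := by
      have h11 : (1:ℝ) / ((1:ℕ):ℝ) = 1 := by norm_num
      calc ((q:ℝ) + 1) = (q:ℝ) + 1 / ((1:ℕ):ℝ) := by rw [h11]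
        _ ≤ (q:ℝ) ^ ((1:ℝ) + ε) := h2
    have := Real.log_le_log (show (0:ℝ) < (q:ℝ) + 1 by linarith) h2'
    rwa [Real.log_rpow hq0] at this
  have e2 : (1 + ε) * Real.log p ≤ Real.log ((p : ℝ) + 1) := by
    have := Real.log_le_log (Real.rpow_pos_of_pos hp0 ((1:ℝ) + ε)) htie
    rwa [Real.log_rpow hp0] at this
  have f1 : Real.log ((q : ℝ) + 1) = Real.log q + Real.log (1 + 1 / q) := by
    rw [← Real.log_mul (by linarith) (by positivity)]
    congr 1
    field_simp
  have f2 : Real.log ((p : ℝ) + 1) = Real.log p + Real.log (1 + 1 / p) := by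
    rw [← Real.log_mul (by linarith) (by positivity)]
    congr 1
    field_simp
  rw [f1] at e1
  rw [f2] at e2
  -- e1 : log(1+1/q) ≤ ε log q ; e2 : ε log p ≤ log(1+1/p)
  have g1 : Real.log (1 + 1 / (q:ℝ)) ≤ ε * Real.log q := by nlinarith
  have g2 : ε * Real.log p ≤ Real.log (1 + 1 / (p:ℝ)) := by nlinarith
  have g3 : Real.log (1 + 1 / (p:ℝ)) < Real.log (1 + 1 / (q:ℝ)) := by
    apply Real.log_lt_log (by positivity)
    have : 1 / (p:ℝ) < 1 / q := by
      apply one_div_lt_one_div_of_lt hq0 hqp'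
    linarith
  have g4 : ε * Real.log q ≤ ε * Real.log p :=
    mul_le_mul_of_nonneg_left (Real.log_le_log hq0 hqp'.le) hε
  linarith

lemma log_le_four_mul_rpow {y : ℝ} (hy : 1 ≤ y) : Real.log y ≤ 4 * y ^ ((1:ℝ)/4) := by
  have hy0 : (0:ℝ) < y := by linarith
  have h1 : Real.log (y ^ ((1:ℝ)/4)) = (1/4) * Real.log y := Real.log_rpow hy0 _
  have h2 : Real.log (y ^ ((1:ℝ)/4)) ≤ y ^ ((1:ℝ)/4) - 1 :=
    Real.log_le_sub_one_of_pos (Real.rpow_pos_of_pos hy0 _)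
  have h3 : (0:ℝ) < y ^ ((1:ℝ)/4) := Real.rpow_pos_of_pos hy0 _
  nlinarith

lemma primesBelow_subset {a b : ℕ} (h : a ≤ b) : Nat.primesBelow a ⊆ Nat.primesBelow b := by
  intro q hq
  rw [Nat.mem_primesBelow] at hq ⊢
  exact ⟨lt_of_lt_of_le hq.1 h, hq.2⟩

lemma centralBinom_le (n : ℕ) (hn : 1 ≤ n) :
    Nat.centralBinom n ≤
      (2*n) ^ (Nat.sqrt (2*n) + 1) * ∏ q ∈ Nat.primesBelow (2*n+1), q := by
  classical
  set s := Nat.sqrt (2*n) with hs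
  set e : ℕ → ℕ := fun q => (Nat.centralBinom n).factorization q with he
  have hCB : Nat.centralBinom n = (2*n).choose n := rfl
  have hsplit : Nat.centralBinom n =
      (∏ q ∈ (Finset.range (2*n+1)).filter (fun q => q ≤ s), q ^ e q) *
      (∏ q ∈ (Finset.range (2*n+1)).filter (fun q => ¬ q ≤ s), q ^ e q) := by
    rw [Finset.prod_filter_mul_prod_filter_not]
    exact (Nat.prod_pow_factorization_centralBinom n).symm
  have hpart1 : (∏ q ∈ (Finset.range (2*n+1)).filter (fun q => q ≤ s), q ^ e q)
      ≤ (2*n) ^ (s + 1) := by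
    calc (∏ q ∈ (Finset.range (2*n+1)).filter (fun q => q ≤ s), q ^ e q)
        ≤ (2*n) ^ ((Finset.range (2*n+1)).filter (fun q => q ≤ s)).card := by
          refine Finset.prod_le_pow_card _ _ _ fun q hq => ?_
          rw [he, hCB]
          exact Nat.pow_factorization_choose_le (by omega)
      _ ≤ (2*n) ^ (s + 1) := by
          refine Nat.pow_le_pow_right (by omega) ?_
          calc ((Finset.range (2*n+1)).filter (fun q => q ≤ s)).card
              ≤ (Finset.range (s+1)).card := by
                refine Finset.card_le_card fun q hq => ?_
                rcases Finset.mem_filter.1 hq with ⟨_, h2⟩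
                exact Finset.mem_range.2 (by omega)
            _ = s + 1 := Finset.card_range _
  have hpart2 : (∏ q ∈ (Finset.range (2*n+1)).filter (fun q => ¬ q ≤ s), q ^ e q)
      ≤ ∏ q ∈ Nat.primesBelow (2*n+1), q := by
    have heq1 : (∏ q ∈ (Finset.range (2*n+1)).filter (fun q => ¬ q ≤ s), q ^ e q) =
        ∏ q ∈ ((Finset.range (2*n+1)).filter (fun q => ¬ q ≤ s)).filter
          (fun q => e q ≠ 0), q ^ e q := by
      refine (Finset.prod_filter_of_ne fun q hq hne => ?_).symm
      intro h0
      rw [h0, pow_zero] at hne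
      exact hne rfl
    rw [heq1]
    have hle1 : ∀ q ∈ ((Finset.range (2*n+1)).filter (fun q => ¬ q ≤ s)).filter
        (fun q => e q ≠ 0), q ^ e q = q := by
      intro q hq
      rcases Finset.mem_filter.1 hq with ⟨hq1, hq2⟩
      rcases Finset.mem_filter.1 hq1 with ⟨_, hq3⟩
      have hgt : s < q := by omega
      have h2n : 2*n < q ^ 2 := Nat.sqrt_lt'.1 hgt
      have : e q ≤ 1 := by
        rw [he, hCB]
        exact Nat.factorization_choose_le_one h2n
      have : e q = 1 := by omega
      rw [this, pow_one]
    rw [Finset.prod_congr rfl hle1]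
    refine Finset.prod_le_prod_of_subset_of_one_le' ?_ ?_
    · intro q hq
      rcases Finset.mem_filter.1 hq with ⟨hq1, hq2⟩
      rcases Finset.mem_filter.1 hq1 with ⟨hqr, _⟩
      have hqprime : q.Prime := by
        have : q ∈ (Nat.centralBinom n).factorization.support := Finsupp.mem_support_iff.2 hq2
        rw [Nat.support_factorization] at this
        exact Nat.prime_of_mem_primeFactors this
      exact Nat.mem_primesBelow.2 ⟨Finset.mem_range.1 hqr, hqprime⟩
    · intro q hq _
      exact (Nat.prime_of_mem_primesBelow hq).pos
  calc Nat.centralBinom n = _ := hsplit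
    _ ≤ (2*n) ^ (s + 1) * ∏ q ∈ Nat.primesBelow (2*n+1), q :=
        Nat.mul_le_mul hpart1 hpart2

set_option maxHeartbeats 1000000 in

lemma primorial_lower {p : ℕ} (hp : p.Prime) (hP : 84934659 ≤ p) :
    (p:ℝ)/4 ≤ Real.log ((∏ q ∈ Nat.primesBelow p, q : ℕ) : ℝ) := by
  set n : ℕ := (p-1)/2 with hn
  have hn4 : 42467328 ≤ n := by omega
  have h2n : 84934656 ≤ 2*n := by omega
  have h2nle : 2*n ≤ p - 1 := by omega
  have hp2n : p ≤ 2*n + 2 := by omega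
  set s : ℕ := Nat.sqrt (2*n) with hs
  set Q2 : ℕ := ∏ q ∈ Nat.primesBelow (2*n+1), q with hQ2
  set Q : ℕ := ∏ q ∈ Nat.primesBelow p, q with hQ
  have hQ2pos : 0 < Q2 :=
    Finset.prod_pos fun q hq => (Nat.prime_of_mem_primesBelow hq).pos
  have hQ2Q : Q2 ≤ Q := by
    refine Finset.prod_le_prod_of_subset_of_one_le' (primesBelow_subset (by omega)) ?_
    intro q hq _
    exact (Nat.prime_of_mem_primesBelow hq).pos
  have hQpos : 0 < Q := lt_of_lt_of_le hQ2pos hQ2Q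
  -- main Nat inequality
  have hmain : 4^n < n * ((2*n) ^ (s + 1) * Q2) := by
    calc 4^n < n * Nat.centralBinom n := Nat.four_pow_lt_mul_centralBinom n (by omega)
      _ ≤ n * ((2*n) ^ (s + 1) * Q2) :=
          Nat.mul_le_mul_left n (centralBinom_le n (by omega))
  -- real versions
  set N : ℝ := (n : ℝ) with hN
  set M : ℝ := ((2*n : ℕ) : ℝ) with hM
  have hNpos : (0:ℝ) < N := by rw [hN]; exact_mod_cast (by omega : 0 < n)
  have hMpos : (0:ℝ) < M := by rw [hM]; exact_mod_cast (by omega : 0 < 2*n)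
  have hM1 : (1:ℝ) ≤ M := by rw [hM]; exact_mod_cast (by omega : 1 ≤ 2*n)
  have hNM : N ≤ M := by rw [hN, hM]; exact_mod_cast (by omega : n ≤ 2*n)
  have hmainR : (4:ℝ)^n < N * (M ^ (s+1) * (Q2:ℝ)) := by
    rw [hN, hM]
    exact_mod_cast hmain
  have hQ2R : (0:ℝ) < (Q2:ℝ) := by exact_mod_cast hQ2pos
  have hlog4 : (1:ℝ) ≤ Real.log 4 := by
    have h1 : Real.exp 1 ≤ 4 := by
      have := Real.exp_one_lt_d9
      linarith
    calc (1:ℝ) = Real.log (Real.exp 1) := (Real.log_exp 1).symm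
      _ ≤ Real.log 4 := Real.log_le_log (Real.exp_pos 1) h1
  have hlogs : (n:ℝ) * Real.log 4 ≤ Real.log N + (s+1) * Real.log M + Real.log (Q2:ℝ) := by
    have h1 : Real.log ((4:ℝ)^n) ≤ Real.log (N * (M ^ (s+1) * (Q2:ℝ))) :=
      Real.log_le_log (by positivity) hmainR.le
    rw [Real.log_pow] at h1
    rw [Real.log_mul hNpos.ne' (by positivity), Real.log_mul (by positivity) hQ2R.ne',
      Real.log_pow] at h1
    push_cast at h1 ⊢
    linarith
  -- bound (s+2) log M
  have hsM : (s:ℝ) ≤ M ^ ((1:ℝ)/2) := by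
    have h1 : (s:ℝ) * (s:ℝ) ≤ M := by
      rw [hM]
      have := Nat.sqrt_le' (2*n)
      have h2 : s * s ≤ 2*n := by
        have h3 : s * s = Nat.sqrt (2*n) ^ 2 := by rw [hs]; ring
        omega
      exact_mod_cast h2
    have h2 : (s:ℝ) = Real.sqrt ((s:ℝ)*(s:ℝ)) := (Real.sqrt_mul_self (by positivity)).symm
    rw [← Real.sqrt_eq_rpow]
    rw [h2]
    exact Real.sqrt_le_sqrt h1
  have hlogM : Real.log M ≤ 4 * M ^ ((1:ℝ)/4) := log_le_four_mul_rpow hM1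
  have hrpow12 : (0:ℝ) < M ^ ((1:ℝ)/2) := Real.rpow_pos_of_pos hMpos _
  have hrpow14 : (0:ℝ) < M ^ ((1:ℝ)/4) := Real.rpow_pos_of_pos hMpos _
  have hrpow34 : (0:ℝ) < M ^ ((3:ℝ)/4) := Real.rpow_pos_of_pos hMpos _
  have hmulpow : M ^ ((1:ℝ)/2) * M ^ ((1:ℝ)/4) = M ^ ((3:ℝ)/4) := by
    rw [← Real.rpow_add hMpos]
    norm_num
  have hpow14le : M ^ ((1:ℝ)/4) ≤ M ^ ((3:ℝ)/4) :=
    Real.rpow_le_rpow_of_exponent_le hM1 (by norm_num)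
  have hlogM0 : 0 ≤ Real.log M := Real.log_nonneg hM1
  have hB1 : ((s:ℝ)+2) * Real.log M ≤ 12 * M ^ ((3:ℝ)/4) := by
    calc ((s:ℝ)+2) * Real.log M ≤ (M ^ ((1:ℝ)/2)+2) * (4 * M ^ ((1:ℝ)/4)) := by
          refine mul_le_mul (by linarith) hlogM hlogM0 (by linarith)
      _ = 4 * (M ^ ((1:ℝ)/2) * M ^ ((1:ℝ)/4)) + 8 * M ^ ((1:ℝ)/4) := by ring
      _ = 4 * M ^ ((3:ℝ)/4) + 8 * M ^ ((1:ℝ)/4) := by rw [hmulpow]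
      _ ≤ 12 * M ^ ((3:ℝ)/4) := by linarith
  -- 96 ≤ M^(1/4)
  have h96 : (96:ℝ) ≤ M ^ ((1:ℝ)/4) := by
    have h1 : ((96:ℝ)^(4:ℕ)) ≤ M := by
      rw [hM]
      have : ((84934656:ℕ):ℝ) ≤ ((2*n:ℕ):ℝ) := by exact_mod_cast h2n
      calc ((96:ℝ)^(4:ℕ)) = ((84934656:ℕ):ℝ) := by norm_num
        _ ≤ _ := this
    have h2 : ((96:ℝ)^(4:ℕ)) ^ ((1:ℝ)/4) = 96 := by
      rw [← Real.rpow_natCast (96:ℝ) 4, ← Real.rpow_mul (by norm_num)]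
      norm_num
    calc (96:ℝ) = ((96:ℝ)^(4:ℕ)) ^ ((1:ℝ)/4) := h2.symm
      _ ≤ M ^ ((1:ℝ)/4) := Real.rpow_le_rpow (by positivity) h1 (by norm_num)
  have hfull : M ^ ((3:ℝ)/4) * M ^ ((1:ℝ)/4) = M := by
    rw [← Real.rpow_add hMpos]
    norm_num
  have hB2 : 12 * M ^ ((3:ℝ)/4) ≤ M / 8 := by
    nlinarith [hrpow34, hrpow14]
  -- combine
  have hlogQ2 : (3/4 : ℝ) * n ≤ Real.log (Q2:ℝ) := by
    have hlogN : Real.log N ≤ Real.log M := Real.log_le_log hNpos hNM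
    have hMn : M = 2 * (n:ℝ) := by rw [hM]; push_cast; ring
    have h1 : ((s:ℝ)+1) * Real.log M + Real.log N ≤ ((s:ℝ)+2) * Real.log M := by nlinarith
    have h2 : (n:ℝ) * 1 ≤ (n:ℝ) * Real.log 4 :=
      mul_le_mul_of_nonneg_left hlog4 (by positivity)
    have h3 : (n:ℝ) - ((s:ℝ)+2) * Real.log M ≤ Real.log (Q2:ℝ) := by linarith
    have h4 : ((s:ℝ)+2) * Real.log M ≤ M / 8 := le_trans hB1 hB2
    rw [hMn] at h4
    linarith
  -- finish
  have hQQ2 : Real.log (Q2:ℝ) ≤ Real.log (Q:ℝ) := Real.log_le_log hQ2R (by exact_mod_cast hQ2Q)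
  have hpn : (p:ℝ) ≤ 3 * (n:ℝ) := by
    have : p ≤ 3 * n := by omega
    exact_mod_cast this
  calc (p:ℝ)/4 ≤ (3/4:ℝ) * n := by linarith
    _ ≤ Real.log (Q2:ℝ) := hlogQ2
    _ ≤ Real.log (Q:ℝ) := hQQ2

lemma crossing_prime_bound {x K p : ℕ} {ε : ℝ} (hx : 2 ≤ x) (hε : 0 < ε) (hp : p.Prime)
    (hK : MaxF ε K) (hKp : MaxF ε (K * p)) (hKx : K < x) :
    (p:ℝ) ≤ 84934659 + 4 * Real.log x := by
  have hlogx : 0 ≤ Real.log x := Real.log_nonneg (by exact_mod_cast (by omega : 1 ≤ x))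
  rcases Nat.lt_or_ge p 84934659 with hcase | hcase
  · have : (p:ℝ) ≤ 84934659 := by exact_mod_cast hcase.le
    linarith
  · have htie := tie_bound hp hK hKp
    have hdvd : ∀ q ∈ p.primesBelow, q ∣ K := fun q hq =>
      small_prime_dvd hε.le hp (Nat.prime_of_mem_primesBelow hq)
        (Nat.lt_of_mem_primesBelow hq) hK htie
    have hQdvd : (∏ q ∈ p.primesBelow, q) ∣ K :=
      Finset.prod_primes_dvd K
        (fun q hq => (Nat.prime_of_mem_primesBelow hq).prime) hdvd
    have hQle : (∏ q ∈ p.primesBelow, q) ≤ K := Nat.le_of_dvd hK.1 hQdvd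
    have hQpos : 0 < ∏ q ∈ p.primesBelow, q :=
      Finset.prod_pos fun q hq => (Nat.prime_of_mem_primesBelow hq).pos
    have h1 : (p:ℝ)/4 ≤ Real.log ((∏ q ∈ p.primesBelow, q : ℕ):ℝ) :=
      primorial_lower hp hcase
    have h2 : Real.log ((∏ q ∈ p.primesBelow, q : ℕ):ℝ) ≤ Real.log x := by
      refine Real.log_le_log (by exact_mod_cast hQpos) ?_
      exact_mod_cast le_trans hQle hKx.le
    linarith

lemma gap (x : ℕ) (hx : 2 ≤ x) :
    ∃ N : ℕ, IsCA N ∧ x ≤ N ∧ (N:ℝ) ≤ (x:ℝ) * (84934659 + 4 * Real.log x) := by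
  obtain ⟨ε, K, p, hε, hp, hK, hKp, hKx, hxKp⟩ := exists_CA_crossing x hx
  refine ⟨K * p, isCA_of_isMax hε hKp, hxKp, ?_⟩
  have h1 : (p:ℝ) ≤ 84934659 + 4 * Real.log x := crossing_prime_bound hx hε hp hK hKp hKx
  have h2 : (K:ℝ) ≤ (x:ℝ) := by exact_mod_cast hKx.le
  have h3 : (0:ℝ) ≤ (p:ℝ) := by positivity
  have h4 : (0:ℝ) ≤ (K:ℝ) := by positivity
  push_cast
  nlinarith

lemma sigma_ratio_le {n N : ℕ} (hn : 0 < n) (hnN : n ≤ N) (hN : IsCA N) :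
    (sigma1 n : ℝ) / n ≤ (sigma1 N : ℝ) / N := by
  obtain ⟨hN0, ε, hε, hmax⟩ := hN
  have h := hmax n hn
  have hn' : (0:ℝ) < (n:ℝ) := by exact_mod_cast hn
  have hN' : (0:ℝ) < (N:ℝ) := by exact_mod_cast hN0
  have hnN' : (n:ℝ) ≤ (N:ℝ) := by exact_mod_cast hnN
  have key : ∀ m : ℕ, 0 < m →
      (sigma1 m : ℝ) / m = ((sigma1 m : ℝ) / (m:ℝ) ^ (1+ε)) * (m:ℝ) ^ ε := by
    intro m hm
    have hm' : (0:ℝ) < (m:ℝ) := by exact_mod_cast hm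
    rw [Real.rpow_add hm', Real.rpow_one]
    have h1 : ((m:ℝ) ^ ε) ≠ 0 := (Real.rpow_pos_of_pos hm' ε).ne'
    field_simp
  rw [key n hn, key N hN0]
  have h1 : (0:ℝ) ≤ (sigma1 N : ℝ) / (N:ℝ) ^ (1+ε) := by positivity
  calc ((sigma1 n : ℝ) / (n:ℝ) ^ (1+ε)) * (n:ℝ) ^ ε
      ≤ ((sigma1 N : ℝ) / (N:ℝ) ^ (1+ε)) * (n:ℝ) ^ ε := by
        refine mul_le_mul_of_nonneg_right h ?_
        positivity
    _ ≤ ((sigma1 N : ℝ) / (N:ℝ) ^ (1+ε)) * (N:ℝ) ^ ε := by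
        refine mul_le_mul_of_nonneg_left ?_ h1
        exact Real.rpow_le_rpow hn'.le hnN' hε.le

lemma tendsto_err1 :
    Tendsto (fun n : ℕ => Real.log (84934659 + 4 * Real.log n) / Real.sqrt (Real.log n))
      atTop (nhds 0) := by
  have hlog : Tendsto (fun n : ℕ => Real.log n) atTop atTop :=
    tendsto_log_atTop.comp tendsto_natCast_atTop_atTop
  suffices h : Tendsto (fun u : ℝ => Real.log (84934659 + 4*u) / Real.sqrt u) atTop (nhds 0) by
    exact h.comp hlog
  have t1 : Tendsto (fun u : ℝ => Real.log u / u ^ ((1:ℝ)/2)) atTop (nhds 0) :=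
    (isLittleO_log_rpow_atTop (by norm_num)).tendsto_div_nhds_zero
  have t2 : Tendsto (fun u : ℝ => Real.log 84934663 / u ^ ((1:ℝ)/2)) atTop (nhds 0) := by
    have h1 : Tendsto (fun u : ℝ => u ^ ((1:ℝ)/2)) atTop atTop :=
      tendsto_rpow_atTop (by norm_num)
    simpa [div_eq_mul_inv] using (h1.inv_tendsto_atTop).const_mul (Real.log 84934663)
  have hub : Tendsto (fun u : ℝ => (Real.log 84934663 + Real.log u) / u ^ ((1:ℝ)/2))
      atTop (nhds 0) := by
    have := t2.add t1
    rw [add_zero] at this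
    refine this.congr fun u => ?_
    rw [add_div]
  refine tendsto_of_tendsto_of_tendsto_of_le_of_le' tendsto_const_nhds hub ?_ ?_
  · filter_upwards [eventually_ge_atTop (1:ℝ)] with u hu
    have h1 : (1:ℝ) ≤ 84934659 + 4*u := by linarith
    have h2 : 0 ≤ Real.log (84934659 + 4*u) := Real.log_nonneg h1
    positivity
  · filter_upwards [eventually_ge_atTop (1:ℝ)] with u hu
    have hu0 : (0:ℝ) < u := by linarith
    have h1 : (84934659:ℝ) + 4*u ≤ 84934663 * u := by nlinarith
    have h2 : Real.log (84934659 + 4*u) ≤ Real.log 84934663 + Real.log u := by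
      calc Real.log (84934659 + 4*u) ≤ Real.log (84934663 * u) :=
            Real.log_le_log (by linarith) h1
        _ = Real.log 84934663 + Real.log u := Real.log_mul (by norm_num) hu0.ne'
    rw [Real.sqrt_eq_rpow]
    have h3 : (0:ℝ) < u ^ ((1:ℝ)/2) := Real.rpow_pos_of_pos hu0 _
    exact div_le_div_of_nonneg_right h2 h3.le

lemma tendsto_err2 :
    Tendsto (fun n : ℕ => Real.log (84934659 + 4 * Real.log n) / Real.log n)
      atTop (nhds 0) := by
  have hlog : Tendsto (fun n : ℕ => Real.log n) atTop atTop :=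
    tendsto_log_atTop.comp tendsto_natCast_atTop_atTop
  have hsqrt : Tendsto (fun n : ℕ => Real.sqrt (Real.log n)) atTop atTop := by
    have h1 : Tendsto (fun u : ℝ => u ^ ((1:ℝ)/2)) atTop atTop :=
      tendsto_rpow_atTop (by norm_num)
    have := h1.comp hlog
    refine this.congr fun n => ?_
    simp [Real.sqrt_eq_rpow, Function.comp]
  have hinv : Tendsto (fun n : ℕ => (Real.sqrt (Real.log n))⁻¹) atTop (nhds 0) :=
    hsqrt.inv_tendsto_atTop
  have := tendsto_err1.mul hinv
  rw [mul_zero] at this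
  refine this.congr' ?_
  filter_upwards [hlog.eventually_ge_atTop 1] with n hn
  have h0 : (0:ℝ) < Real.log n := by linarith
  have hs : Real.sqrt (Real.log n) * Real.sqrt (Real.log n) = Real.log n :=
    Real.mul_self_sqrt h0.le
  have hs0 : (0:ℝ) < Real.sqrt (Real.log n) := Real.sqrt_pos.2 h0
  field_simp
  rw [sq, hs]
  ring

set_option maxHeartbeats 2000000 in
lemma main_transfer (a δ : ℝ) (hδ : 0 < δ) (M : ℕ)
    (h : ∀ N : ℕ, M ≤ N → IsCA N → a ≤ T N) :
    ∀ᶠ n : ℕ in atTop, a - δ ≤ T n := by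
  set γ : ℝ := Real.exp Real.eulerMascheroniConstant with hγ
  have hγ0 : 0 < γ := Real.exp_pos _
  have hE1 : ∀ᶠ n : ℕ in atTop,
      γ * (Real.log (84934659 + 4 * Real.log n) / Real.sqrt (Real.log n)) ≤ δ/2 := by
    have h0 := tendsto_err1.const_mul γ
    rw [mul_zero] at h0
    exact h0.eventually_le_const (by linarith)
  have hE2 : ∀ᶠ n : ℕ in atTop,
      a * (Real.log (84934659 + 4 * Real.log n) / Real.log n) ≤ δ := by
    have h0 := tendsto_err2.const_mul a
    rw [mul_zero] at h0
    exact h0.eventually_le_const (by linarith)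
  filter_upwards [eventually_ge_atTop 2, eventually_ge_atTop M, hE1, hE2] with n hn2 hnM he1 he2
  obtain ⟨N, hNCA, hnN, hNle⟩ := gap n hn2
  have hn0 : 0 < n := by omega
  have hN0 : 0 < N := hNCA.1
  have hn1 : (1:ℝ) < (n:ℝ) := by exact_mod_cast (by omega : 1 < n)
  have hN1 : (1:ℝ) < (N:ℝ) := by
    have h1 : 1 < N := by omega
    exact_mod_cast h1
  set ln : ℝ := Real.log n with hln
  set lN : ℝ := Real.log N with hlN
  have hln0 : 0 < ln := Real.log_pos hn1
  have hlN0 : 0 < lN := Real.log_pos hN1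
  have hlnN : ln ≤ lN := Real.log_le_log (by linarith) (by exact_mod_cast hnN)
  set L : ℝ := Real.sqrt ln with hL
  set L' : ℝ := Real.sqrt lN with hL'
  have hL0 : 0 < L := Real.sqrt_pos.2 hln0
  have hL'0 : 0 < L' := Real.sqrt_pos.2 hlN0
  have hLL' : L ≤ L' := Real.sqrt_le_sqrt hlnN
  have hL2 : L * L = ln := Real.mul_self_sqrt hln0.le
  have hL'2 : L' * L' = lN := Real.mul_self_sqrt hlN0.le
  set C : ℝ := 84934659 + 4 * ln with hC
  have hC1 : (1:ℝ) ≤ C := by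
    have h1 : 0 ≤ ln := hln0.le
    rw [hC]; linarith
  have hlogC0 : 0 ≤ Real.log C := Real.log_nonneg hC1
  have hlNle : lN ≤ ln + Real.log C := by
    have h1 : (N:ℝ) ≤ (n:ℝ) * C := by
      rw [hC, hln]
      exact hNle
    have h2 : lN ≤ Real.log ((n:ℝ) * C) := Real.log_le_log (by linarith) h1
    rwa [Real.log_mul (by linarith) (by linarith), ← hln] at h2
  set s : ℝ := (sigma1 N : ℝ) / N with hs
  set x : ℝ := Real.log ln with hx
  set x' : ℝ := Real.log lN with hx'
  have hxx' : x' - x ≤ Real.log C / ln := by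
    have h1 : x' - x = Real.log (lN / ln) := (Real.log_div hlN0.ne' hln0.ne').symm
    rw [h1]
    have h2 : Real.log (lN / ln) ≤ lN / ln - 1 :=
      Real.log_le_sub_one_of_pos (by positivity)
    have h3 : lN / ln - 1 = (lN - ln) / ln := by field_simp
    have h4 : (lN - ln) / ln ≤ Real.log C / ln := by
      gcongr
      linarith
    linarith
  have hxx'0 : 0 ≤ x' - x := by
    have h1 : x ≤ x' := Real.log_le_log hln0 hlnN
    linarith
  have hσ : (sigma1 n : ℝ) / n ≤ s := sigma_ratio_le hn0 hnN hNCA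
  have hTn : (γ * x - s) * L ≤ T n := by
    rw [T, ← hln, ← hx, ← hL, ← hγ]
    refine mul_le_mul_of_nonneg_right ?_ hL0.le
    linarith
  have hTN : T N = (γ * x' - s) * L' := by
    rw [T, ← hlN, ← hx', ← hL', ← hγ, ← hs]
  have ha : a ≤ T N := h N (le_trans hnM hnN) hNCA
  have herr1 : γ * (x' - x) * L ≤ δ/2 := by
    have h1 : γ * (x' - x) * L ≤ γ * (Real.log C / ln) * L := by
      refine mul_le_mul_of_nonneg_right ?_ hL0.le
      exact mul_le_mul_of_nonneg_left hxx' hγ0.le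
    have h2 : γ * (Real.log C / ln) * L = γ * (Real.log C / L) := by
      rw [← hL2]
      field_simp
    have h3 : γ * (Real.log C / L) ≤ δ/2 := by
      rw [hL, hln] at *
      exact he1
    linarith
  have hid : (γ * x - s) * L = (γ * x' - s) * L - γ * (x' - x) * L := by ring
  have hmain1 : (γ * x' - s) * L - δ/2 ≤ T n := by linarith
  rcases le_or_gt (γ * x' - s) 0 with hsign | hsign
  · have h1 : (γ * x' - s) * L' ≤ (γ * x' - s) * L := mul_le_mul_of_nonpos_left hLL' hsign
    rw [hTN] at ha
    linarith
  · rcases le_or_gt a (δ/2) with hacase | hacase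
    · have h1 : 0 ≤ (γ * x' - s) * L := by positivity
      linarith
    · have ha0 : 0 < a := by linarith
      have hset : a / L' ≤ γ * x' - s := by
        rw [div_le_iff₀ hL'0]
        rw [hTN] at ha
        linarith
      have h1 : a / L' * L ≤ (γ * x' - s) * L := mul_le_mul_of_nonneg_right hset hL0.le
      have h1' : a / L' * L = a * L / L' := by ring
      have h2 : a - a * (L' - L) / L ≤ a * L / L' := by
        have e : a * L / L' - (a - a * (L' - L) / L) = a * (L - L')^2 / (L * L') := by
          field_simp
          ring
        have e2 : 0 ≤ a * (L - L')^2 / (L * L') := by positivity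
        linarith
      have h3 : a * (L' - L) / L ≤ δ/2 := by
        have e1 : (L' - L) * (L' + L) = lN - ln := by nlinarith [hL2, hL'2]
        have hstep1 : L' - L ≤ (lN - ln) / (2 * L) := by
          rw [le_div_iff₀ (by positivity)]
          nlinarith
        have hstep2 : a * (L' - L) / L ≤ a * ((lN - ln) / (2 * L)) / L := by
          gcongr
        have hstep3 : a * ((lN - ln) / (2 * L)) / L = a * (lN - ln) / (2 * ln) := by
          rw [mul_div_assoc', div_div, mul_assoc, hL2]
        have hstep4 : a * (lN - ln) / (2 * ln) ≤ a * Real.log C / (2 * ln) := by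
          gcongr
          linarith
        have hstep5 : a * Real.log C / (2 * ln) = (a * (Real.log C / ln)) / 2 := by
          rw [mul_div_assoc', div_div, mul_comm (2:ℝ) ln]
        have hstep6 : (a * (Real.log C / ln)) / 2 ≤ δ/2 := by linarith [he2]
        linarith
      linarith

end CAProof

/-- If the liminf of `T` along the colossally abundant numbers is at least `c`, then the
liminf of `T` over all integers is at least `c`. -/
theorem liminf_T_ge_of_liminf_CA_ge (c : ℝ)
    (h : c ≤ Filter.liminf T (Filter.atTop ⊓ Filter.principal {n : ℕ | IsCA n})) :
    c ≤ Filter.liminf T Filter.atTop := by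
  classical
  have hliminf' : Filter.liminf T (Filter.atTop ⊓ Filter.principal {n : ℕ | IsCA n}) =
      sSup {a : ℝ | ∀ᶠ n in (Filter.atTop ⊓ Filter.principal {n : ℕ | IsCA n}), a ≤ T n} :=
    Filter.liminf_eq
  have hliminf : Filter.liminf T Filter.atTop =
      sSup {a : ℝ | ∀ᶠ n in Filter.atTop, a ≤ T n} := Filter.liminf_eq
  set S' : Set ℝ := {a : ℝ | ∀ᶠ n in (Filter.atTop ⊓ Filter.principal {n : ℕ | IsCA n}), a ≤ T n}
    with hS'
  set S : Set ℝ := {a : ℝ | ∀ᶠ n in Filter.atTop, a ≤ T n} with hS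
  rw [hliminf'] at h
  rw [hliminf]
  have hsub : S ⊆ S' := fun a ha => ha.filter_mono inf_le_left
  have htrans : ∀ a ∈ S', ∀ δ : ℝ, 0 < δ → (a - δ) ∈ S := by
    intro a ha δ hδ
    rw [hS', Set.mem_setOf_eq, Filter.eventually_inf_principal] at ha
    obtain ⟨M, hM⟩ := Filter.eventually_atTop.1 ha
    exact CAProof.main_transfer a δ hδ M (fun N hMN hCA => hM N hMN hCA)
  by_cases hne : S'.Nonempty
  · by_cases hbdd : BddAbove S'
    · have hSbdd : BddAbove S := BddAbove.mono hsub hbdd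
      refine le_of_forall_pos_le_add fun δ hδ => ?_
      obtain ⟨a, haS', hagt⟩ := exists_lt_of_lt_csSup hne
        (show c - δ/2 < sSup S' from lt_of_lt_of_le (by linarith) h)
      have haS : (a - δ/2) ∈ S := htrans a haS' (δ/2) (by linarith)
      have h1 : a - δ/2 ≤ sSup S := le_csSup hSbdd haS
      linarith
    · rw [Real.sSup_of_not_bddAbove hbdd] at h
      obtain ⟨a, haS', ha1⟩ := not_bddAbove_iff.1 hbdd 1
      have ha0 : (0:ℝ) < a := by linarith
      have haS : (a - a/2) ∈ S := htrans a haS' (a/2) (by linarith)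
      by_cases hSbdd : BddAbove S
      · have h1 : a - a/2 ≤ sSup S := le_csSup hSbdd haS
        linarith
      · rw [Real.sSup_of_not_bddAbove hSbdd]
        linarith
  · have hS'empty : S' = ∅ := Set.not_nonempty_iff_eq_empty.1 hne
    have hSempty : S = ∅ := Set.eq_empty_of_subset_empty (hS'empty ▸ hsub)
    rw [hS'empty, Real.sSup_empty] at h
    rw [hSempty, Real.sSup_empty]
    exact h
end
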